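/- arXiv:2301.07530 — 2 statements merged into one kernel-verified Lean document; each statement's English description precedes it below -/
import Mathlib

section
/- Let K ⊆ ℝ^d be a convex set of diameter at most D > 0, T ≥ 1, η > 0, and let ℓ₁, …, ℓ_T : ℝ^d → ℝ be differentiable convex functions (ℓ_t(y) ≥ ℓ_t(x) + ⟨∇ℓ_t(x), y − x⟩ for x, y ∈ K). Set ε := 2/D². Let μ̂₁, …, μ̂_{T+1} ∈ K and ν₁, …, ν_{T+1} ∈ K; write ∇_t := ∇ℓ_t(μ̂_t), G₀ := ε·I_d, G_t := G_{t−1} + ∇_t∇_tᵀ, H_t := G_t^{1/2} (the unique positive semidefinite square root of G_t), and μ̂_{temp,t+1} := μ̂_t − η·H_t⁻¹∇_t. Assume for every 1 ≤ t ≤ T the ADJUST contraction (μ̂_{t+1} − ν_{t+1})ᵀ H_t (μ̂_{t+1} − ν_{t+1}) ≤ (μ̂_{temp,t+1} − ν_t)ᵀ H_t (μ̂_{temp,t+1} − ν_t). Then Σ_{t=1}^{T} (ℓ_t(μ̂_t) − ℓ_t(ν_t)) ≤ √2·D/(2η) + (η/2)·(Tr(G_T·H_T⁻¹) + Tr(H_T))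 + (1/(2η))·Σ_{t=1}^{T} (μ̂_t − ν_t)ᵀ (H_t − H_{t−1}) (μ̂_t − ν_t). -/
open Matrix RealInnerProductSpace Finset

/-!
Write `x_t = μ̂_t − ν_t`. Convexity bounds the regret of round `t` by `⟨∇_t, x_t⟩`, and expanding
the contraction hypothesis in the `H_t`-norm gives
`2η⟨∇_t, x_t⟩ ≤ ‖x_t‖²_{H_t} − ‖x_{t+1}‖²_{H_t} + η²‖∇_t‖²_{H_t⁻¹}`.
After splitting `‖x_t‖²_{H_t} = ‖x_t‖²_{H_{t−1}} + x_tᵀ(H_t − H_{t−1})x_t` the sum telescopes to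
`‖x_1‖²_{H_0} ≤ √ε·D² = √2·D` plus the drift terms. Since `H_t² = H_{t−1}² + ∇_t∇_tᵀ`,
`∇_tᵀH_t⁻¹∇_t = Tr H_t − Tr(H_{t−1}²H_t⁻¹)`, and `Tr((H_t − H_{t−1})H_t⁻¹(H_t − H_{t−1})) ≥ 0`
turns this into `∇_tᵀH_t⁻¹∇_t ≤ 2(Tr H_t − Tr H_{t−1})`; these telescope to `2 Tr H_T`,
which equals `Tr H_T + Tr(G_T H_T⁻¹)`.
-/

theorem Finset.sum_Icc_one_sub_succ {M : Type*} [AddCommGroup M] (f : ℕ → M) (n : ℕ) :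
    ∑ i ∈ Icc 1 n, (f i - f (i + 1)) = f 1 - f (n + 1) := by
  induction n with
  | zero => simp
  | succ k ih => rw [sum_Icc_succ_top (by omega), ih]; abel

theorem Finset.sum_Icc_one_sub_pred {M : Type*} [AddCommGroup M] (f : ℕ → M) (n : ℕ) :
    ∑ i ∈ Icc 1 n, (f i - f (i - 1)) = f n - f 0 := by
  simpa [sub_eq_add_neg, add_comm] using sum_Icc_one_sub_succ (fun i ↦ -f (i - 1)) n

theorem EuclideanSpace.dotProduct_self_eq_norm_sq {n : Type*} [Fintype n]
    (x : EuclideanSpace ℝ n) : x.ofLp ⬝ᵥ x.ofLp = ‖x‖ ^ 2 := by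
  rw [← real_inner_self_eq_norm_sq, EuclideanSpace.inner_eq_star_dotProduct, star_trivial]

theorem EuclideanSpace.sub_le_dotProduct_of_le_add_inner {n : Type*} [Fintype n]
    {f : EuclideanSpace ℝ n → ℝ} {x y v : EuclideanSpace ℝ n} (h : f x + ⟪v, y - x⟫ ≤ f y) :
    f x - f y ≤ (x.ofLp - y.ofLp) ⬝ᵥ v.ofLp := by
  rw [← neg_sub, inner_neg_right, EuclideanSpace.inner_eq_star_dotProduct, star_trivial,
    WithLp.ofLp_sub] at h
  linarith

namespace Matrix

variable {n : Type*} [Fintype n]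

theorem posDef_of_eq_add_vecMulVec_self {T : ℕ} {G : ℕ → Matrix n n ℝ} {v : ℕ → n → ℝ}
    (hG₀ : (G 0).PosDef) (hG : ∀ t ∈ Icc 1 T, G t = G (t - 1) + vecMulVec (v t) (v t)) :
    ∀ t ≤ T, (G t).PosDef := by
  intro t ht
  induction t with
  | zero => exact hG₀
  | succ k ih =>
    rw [hG (k + 1) (mem_Icc.2 ⟨by omega, ht⟩), Nat.add_sub_cancel]
    simpa using (ih (by omega)).add_posSemidef (posSemidef_vecMulVec_self_star (v (k + 1)))

theorem trace_mul_vecMulVec_self (M : Matrix n n ℝ) (v : n → ℝ) :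
    (M * vecMulVec v v).trace = v ⬝ᵥ M *ᵥ v := by
  rw [mul_vecMulVec, trace_vecMulVec, dotProduct_comm]

variable [DecidableEq n]

theorem PosSemidef.posDef_of_mul_self {A : Matrix n n ℝ} (hA : A.PosSemidef)
    (hAA : (A * A).PosDef) : A.PosDef :=
  hA.posDef_iff_det_ne_zero.2 fun h ↦ hAA.det_pos.ne' (by rw [det_mul, h, zero_mul])

open scoped MatrixOrder in
theorem PosSemidef.eq_sqrt_smul_one {A : Matrix n n ℝ} {c : ℝ} (hA : A.PosSemidef)
    (hAA : A * A = c • 1) (hc : 0 ≤ c) : A = √c • 1 := by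
  refine (CFC.sq_eq_sq_iff _ _ hA.nonneg (PosSemidef.one.smul (Real.sqrt_nonneg c)).nonneg).1 ?_
  rw [sq, sq, hAA, smul_mul_smul_comm, Real.mul_self_sqrt hc, one_mul]

theorem PosSemidef.dotProduct_mulVec_le_of_mul_self_eq_smul_one {A : Matrix n n ℝ} {c D : ℝ}
    (hA : A.PosSemidef) (hAA : A * A = c • 1) (hc : 0 ≤ c) {x : EuclideanSpace ℝ n}
    (hx : ‖x‖ ≤ D) : x.ofLp ⬝ᵥ A *ᵥ x.ofLp ≤ √c * D ^ 2 := by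
  rw [hA.eq_sqrt_smul_one hAA hc, smul_mulVec, one_mulVec, dotProduct_smul, smul_eq_mul,
    EuclideanSpace.dotProduct_self_eq_norm_sq]
  gcongr

theorem dotProduct_sub_smul_inv_mulVec {A : Matrix n n ℝ} (hA : A.IsSymm) (hdet : IsUnit A.det)
    (η : ℝ) (w v : n → ℝ) :
    (w - η • (A⁻¹ *ᵥ v)) ⬝ᵥ A *ᵥ (w - η • (A⁻¹ *ᵥ v)) =
      w ⬝ᵥ A *ᵥ w - 2 * η * (w ⬝ᵥ v) + η ^ 2 * (v ⬝ᵥ A⁻¹ *ᵥ v) := by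
  have hAinv : A * A⁻¹ = 1 := mul_nonsing_inv A hdet
  have hcross : (A⁻¹ *ᵥ v) ⬝ᵥ A *ᵥ w = w ⬝ᵥ v := by
    rw [dotProduct_mulVec, ← mulVec_transpose, hA.eq, mulVec_mulVec, hAinv, one_mulVec,
      dotProduct_comm]
  rw [mulVec_sub, mulVec_smul, mulVec_mulVec, hAinv, one_mulVec, dotProduct_sub, sub_dotProduct,
    sub_dotProduct, smul_dotProduct, smul_dotProduct, dotProduct_smul, dotProduct_smul, hcross,
    dotProduct_comm (A⁻¹ *ᵥ v) v]
  simp only [smul_eq_mul]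
  ring

theorem two_mul_dotProduct_le_of_dotProduct_mulVec_le {A : Matrix n n ℝ} (hA : A.PosDef)
    {η : ℝ} {x x' v : n → ℝ}
    (h : x' ⬝ᵥ A *ᵥ x' ≤ (x - η • (A⁻¹ *ᵥ v)) ⬝ᵥ A *ᵥ (x - η • (A⁻¹ *ᵥ v))) :
    2 * η * (x ⬝ᵥ v) ≤ x ⬝ᵥ A *ᵥ x - x' ⬝ᵥ A *ᵥ x' + η ^ 2 * (v ⬝ᵥ A⁻¹ *ᵥ v) := by
  rw [dotProduct_sub_smul_inv_mulVec (isHermitian_iff_isSymm.1 hA.isHermitian)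
    ((isUnit_iff_isUnit_det A).1 hA.isUnit)] at h
  linarith

theorem two_mul_sum_dotProduct_le_of_dotProduct_mulVec_le {T : ℕ} {η : ℝ}
    {H : ℕ → Matrix n n ℝ} {x v : ℕ → n → ℝ} (hH : ∀ t ≤ T, (H t).PosDef)
    (hstep : ∀ t ∈ Icc 1 T, x (t + 1) ⬝ᵥ H t *ᵥ x (t + 1) ≤
      (x t - η • ((H t)⁻¹ *ᵥ v t)) ⬝ᵥ H t *ᵥ (x t - η • ((H t)⁻¹ *ᵥ v t))) :
    2 * η * ∑ t ∈ Icc 1 T, x t ⬝ᵥ v t ≤ x 1 ⬝ᵥ H 0 *ᵥ x 1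
      + ∑ t ∈ Icc 1 T, x t ⬝ᵥ (H t - H (t - 1)) *ᵥ x t
      + η ^ 2 * ∑ t ∈ Icc 1 T, v t ⬝ᵥ (H t)⁻¹ *ᵥ v t := by
  have hsum := sum_le_sum fun t ht ↦
    two_mul_dotProduct_le_of_dotProduct_mulVec_le (hH t (mem_Icc.1 ht).2) (hstep t ht)
  have htel : ∑ t ∈ Icc 1 T, (x t ⬝ᵥ H t *ᵥ x t - x (t + 1) ⬝ᵥ H t *ᵥ x (t + 1)) =
      x 1 ⬝ᵥ H 0 *ᵥ x 1 - x (T + 1) ⬝ᵥ H T *ᵥ x (T + 1)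
        + ∑ t ∈ Icc 1 T, x t ⬝ᵥ (H t - H (t - 1)) *ᵥ x t := by
    have h := sum_Icc_one_sub_succ (fun t ↦ x t ⬝ᵥ H (t - 1) *ᵥ x t) T
    simp only [Nat.add_sub_cancel, Nat.sub_self] at h
    rw [← h, ← sum_add_distrib]
    refine sum_congr rfl fun t _ ↦ ?_
    rw [sub_mulVec, dotProduct_sub]
    ring
  have hlast : 0 ≤ x (T + 1) ⬝ᵥ H T *ᵥ x (T + 1) := by
    simpa using (hH T le_rfl).posSemidef.dotProduct_mulVec_nonneg (x (T + 1))
  rw [sum_add_distrib, htel, ← mul_sum, ← mul_sum] at hsum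
  linarith

theorem dotProduct_inv_mulVec_le_two_mul_trace_sub {A B : Matrix n n ℝ} {v : n → ℝ}
    (hA : A.PosDef) (hB : B.PosSemidef) (h : A * A = B * B + vecMulVec v v) :
    v ⬝ᵥ A⁻¹ *ᵥ v ≤ 2 * (A.trace - B.trace) := by
  have hdet : IsUnit A.det := (isUnit_iff_isUnit_det A).1 hA.isUnit
  have hAinv : A * A⁻¹ = 1 := mul_nonsing_inv A hdet
  have hinvA : A⁻¹ * A = 1 := nonsing_inv_mul A hdet
  have hquad : v ⬝ᵥ A⁻¹ *ᵥ v = A.trace - (B * B * A⁻¹).trace := by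
    have : vecMulVec v v = A * A - B * B := by rw [h, add_sub_cancel_left]
    rw [← trace_mul_vecMulVec_self, this, mul_sub, ← mul_assoc, hinvA, one_mul,
      trace_sub, trace_mul_comm A⁻¹]
  have hsq : 0 ≤ ((A - B) * A⁻¹ * (A - B)).trace := by
    have := hA.inv.posSemidef.conjTranspose_mul_mul_same (A - B)
    rw [conjTranspose_sub, hA.1.eq, hB.1.eq] at this
    exact this.trace_nonneg
  have hexpand : (A - B) * A⁻¹ * (A - B) = A - B - (B - B * A⁻¹ * B) := by
    rw [sub_mul, hAinv, sub_mul, one_mul, mul_sub, mul_assoc B A⁻¹ A, hinvA, mul_one]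
  rw [hexpand, trace_sub, trace_sub, trace_sub, trace_mul_cycle B A⁻¹ B] at hsq
  linarith

theorem sum_dotProduct_inv_mulVec_le_two_mul_trace {T : ℕ} {H : ℕ → Matrix n n ℝ}
    {v : ℕ → n → ℝ} (hH : ∀ t ≤ T, (H t).PosDef)
    (hHH : ∀ t ∈ Icc 1 T, H t * H t = H (t - 1) * H (t - 1) + vecMulVec (v t) (v t)) :
    ∑ t ∈ Icc 1 T, v t ⬝ᵥ (H t)⁻¹ *ᵥ v t ≤ 2 * (H T).trace := by
  have hstep : ∀ t ∈ Icc 1 T, v t ⬝ᵥ (H t)⁻¹ *ᵥ v t ≤ 2 * ((H t).trace - (H (t - 1)).trace) :=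
    fun t ht ↦ dotProduct_inv_mulVec_le_two_mul_trace_sub (hH t (mem_Icc.1 ht).2)
      (hH (t - 1) (by grind)).posSemidef (hHH t ht)
  calc ∑ t ∈ Icc 1 T, v t ⬝ᵥ (H t)⁻¹ *ᵥ v t
      ≤ ∑ t ∈ Icc 1 T, 2 * ((H t).trace - (H (t - 1)).trace) := sum_le_sum hstep
    _ = 2 * ((H T).trace - (H 0).trace) := by
      rw [← mul_sum, sum_Icc_one_sub_pred (fun t ↦ (H t).trace)]
    _ ≤ 2 * (H T).trace := by linarith [(hH 0 T.zero_le).posSemidef.trace_nonneg]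

end Matrix

theorem dadagrad_regret_lemma_general {d : ℕ}
    (K : Set (EuclideanSpace ℝ (Fin d)))
    (D : ℝ) (hD : 0 < D) (hdiam : ∀ x ∈ K, ∀ y ∈ K, ‖x - y‖ ≤ D)
    (T : ℕ) (η : ℝ) (hη : 0 < η)
    (ℓ : ℕ → EuclideanSpace ℝ (Fin d) → ℝ)
    (g : ℕ → EuclideanSpace ℝ (Fin d) → EuclideanSpace ℝ (Fin d))
    (hconv : ∀ t ∈ Icc 1 T, ∀ x ∈ K, ∀ y ∈ K, ℓ t x + ⟪g t x, y - x⟫ ≤ ℓ t y)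
    (ε : ℝ) (hε : ε = 2 / D ^ 2)
    (p ν : ℕ → EuclideanSpace ℝ (Fin d))
    (hpK : ∀ t ∈ Icc 1 (T + 1), p t ∈ K) (hνK : ∀ t ∈ Icc 1 (T + 1), ν t ∈ K)
    (Gm H : ℕ → Matrix (Fin d) (Fin d) ℝ)
    (hG0 : Gm 0 = ε • 1)
    (hGrec : ∀ t ∈ Icc 1 T,
      Gm t = Gm (t - 1) + Matrix.vecMulVec (g t (p t) : Fin d → ℝ) (g t (p t) : Fin d → ℝ))
    (hH : ∀ t ≤ T, (H t).PosSemidef ∧ H t * H t = Gm t)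
    (hadj : ∀ t ∈ Icc 1 T,
      (p (t + 1) - ν (t + 1)) ⬝ᵥ (H t).mulVec (p (t + 1) - ν (t + 1)) ≤
      ((p t - η • (EuclideanSpace.equiv (Fin d) ℝ).symm ((H t)⁻¹.mulVec (g t (p t)))) - ν t)
        ⬝ᵥ (H t).mulVec
          ((p t - η • (EuclideanSpace.equiv (Fin d) ℝ).symm ((H t)⁻¹.mulVec (g t (p t))))
            - ν t)) :
    ∑ t ∈ Icc 1 T, (ℓ t (p t) - ℓ t (ν t)) ≤
      Real.sqrt 2 * D / (2 * η) + η / 2 * ((Gm T * (H T)⁻¹).trace + (H T).trace)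
        + 1 / (2 * η) *
          ∑ t ∈ Icc 1 T, (p t - ν t) ⬝ᵥ (H t - H (t - 1)).mulVec (p t - ν t) := by
  simp only [WithLp.ofLp_sub, WithLp.ofLp_smul, EuclideanSpace.equiv,
    PiLp.continuousLinearEquiv_symm_apply, WithLp.ofLp_toLp] at hadj ⊢
  have hε₀ : 0 < ε := hε ▸ by positivity
  have hGpd : ∀ t ≤ T, (Gm t).PosDef := posDef_of_eq_add_vecMulVec_self
    (hG0 ▸ PosDef.one.smul hε₀) hGrec
  have hHpd : ∀ t ≤ T, (H t).PosDef := fun t ht ↦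
    (hH t ht).1.posDef_of_mul_self ((hH t ht).2 ▸ hGpd t ht)
  have hdesc := two_mul_sum_dotProduct_le_of_dotProduct_mulVec_le (η := η)
    (x := fun t ↦ (p t).ofLp - (ν t).ofLp) (v := fun t ↦ (g t (p t)).ofLp) hHpd fun t ht ↦
    (hadj t ht).trans_eq (by rw [sub_right_comm (p t).ofLp])
  have hgrad := sum_dotProduct_inv_mulVec_le_two_mul_trace hHpd fun t ht ↦ by
    rw [(hH t (mem_Icc.1 ht).2).2, (hH (t - 1) (by grind)).2]; exact hGrec t ht
  have hfirst : ((p 1).ofLp - (ν 1).ofLp) ⬝ᵥ H 0 *ᵥ ((p 1).ofLp - (ν 1).ofLp) ≤ √2 * D := by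
    have h1 : 1 ∈ Icc 1 (T + 1) := by simp
    rw [← WithLp.ofLp_sub]
    refine ((hH 0 T.zero_le).1.dotProduct_mulVec_le_of_mul_self_eq_smul_one
      ((hH 0 T.zero_le).2.trans hG0) hε₀.le (hdiam _ (hpK 1 h1) _ (hνK 1 h1))).trans_eq ?_
    rw [hε, Real.sqrt_div zero_le_two, Real.sqrt_sq hD.le]
    field_simp
  have htrace : (Gm T * (H T)⁻¹).trace = (H T).trace := by
    rw [← (hH T le_rfl).2, mul_nonsing_inv_cancel_right _ _
      ((isUnit_iff_isUnit_det _).1 (hHpd T le_rfl).isUnit)]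
  have key : 2 * η * ∑ t ∈ Icc 1 T, (ℓ t (p t) - ℓ t (ν t)) ≤ √2 * D
      + ∑ t ∈ Icc 1 T, ((p t).ofLp - (ν t).ofLp) ⬝ᵥ (H t - H (t - 1)) *ᵥ ((p t).ofLp - (ν t).ofLp)
      + 2 * η ^ 2 * (H T).trace := by
    have hlin := sum_le_sum fun t ht ↦ EuclideanSpace.sub_le_dotProduct_of_le_add_inner
      (hconv t ht _ (hpK t (Icc_subset_Icc_right T.le_succ ht)) _
        (hνK t (Icc_subset_Icc_right T.le_succ ht)))
    nlinarith [mul_le_mul_of_nonneg_left hgrad (sq_nonneg η)]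
  rw [htrace]
  refine le_of_mul_le_mul_left (key.trans_eq ?_) (by positivity : 0 < 2 * η)
  field_simp
  ring

/-- Dynamic AdaGrad auxiliary lemma (the paper's adaptation of Hazan's Lemma 5.13):
with `ε = 2/D²`, `G₀ = εI`, `G_t = G_{t−1} + ∇_t∇_tᵀ`, `H_t` the unique positive semidefinite
square root of `G_t`, and predictors satisfying the ADJUST contraction in the `H_t`-norm
against the candidates `μ̂_t − ηH_t⁻¹∇_t`, the regret against the advice `ν` is at most
`√2·D/(2η) + (η/2)(Tr(G_T H_T⁻¹) + Tr(H_T)) + (1/(2η)) Σ_t (μ̂_t − ν_t)ᵀ(H_t − H_{t−1})(μ̂_t − ν_t)`. -/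
theorem dadagrad_regret_lemma {d : ℕ}
    (K : Set (EuclideanSpace ℝ (Fin d))) (hK : Convex ℝ K)
    (D : ℝ) (hD : 0 < D) (hdiam : ∀ x ∈ K, ∀ y ∈ K, ‖x - y‖ ≤ D)
    (T : ℕ) (hT : 1 ≤ T) (η : ℝ) (hη : 0 < η)
    (ℓ : ℕ → EuclideanSpace ℝ (Fin d) → ℝ)
    (g : ℕ → EuclideanSpace ℝ (Fin d) → EuclideanSpace ℝ (Fin d))
    (hdiff : ∀ t, ∀ x, HasGradientAt (ℓ t) (g t x) x)
    (hconv : ∀ t ∈ Icc 1 T, ∀ x ∈ K, ∀ y ∈ K, ℓ t x + ⟪g t x, y - x⟫ ≤ ℓ t y)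
    (ε : ℝ) (hε : ε = 2 / D ^ 2)
    (p ν : ℕ → EuclideanSpace ℝ (Fin d))
    (hpK : ∀ t ∈ Icc 1 (T + 1), p t ∈ K) (hνK : ∀ t ∈ Icc 1 (T + 1), ν t ∈ K)
    (Gm H : ℕ → Matrix (Fin d) (Fin d) ℝ)
    (hG0 : Gm 0 = ε • 1)
    (hGrec : ∀ t ∈ Icc 1 T,
      Gm t = Gm (t - 1) + Matrix.vecMulVec (g t (p t) : Fin d → ℝ) (g t (p t) : Fin d → ℝ))
    (hH : ∀ t ≤ T, (H t).PosSemidef ∧ H t * H t = Gm t)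
    (hadj : ∀ t ∈ Icc 1 T,
      (p (t + 1) - ν (t + 1)) ⬝ᵥ (H t).mulVec (p (t + 1) - ν (t + 1)) ≤
      ((p t - η • (EuclideanSpace.equiv (Fin d) ℝ).symm ((H t)⁻¹.mulVec (g t (p t)))) - ν t)
        ⬝ᵥ (H t).mulVec
          ((p t - η • (EuclideanSpace.equiv (Fin d) ℝ).symm ((H t)⁻¹.mulVec (g t (p t))))
            - ν t)) :
    ∑ t ∈ Icc 1 T, (ℓ t (p t) - ℓ t (ν t)) ≤
      Real.sqrt 2 * D / (2 * η) + η / 2 * ((Gm T * (H T)⁻¹).trace + (H T).trace)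
        + 1 / (2 * η) *
          ∑ t ∈ Icc 1 T, (p t - ν t) ⬝ᵥ (H t - H (t - 1)).mulVec (p t - ν t) :=
  dadagrad_regret_lemma_general K D hD hdiam T η hη ℓ g hconv ε hε p ν hpK hνK Gm H hG0 hGrec hH
    hadj
end

section
/- Let K ⊆ ℝ^d be a convex set of diameter at most D with D ≥ 1/√2, T ≥ 1, and let ℓ₁, …, ℓ_T : ℝ^d → ℝ be differentiable convex functions on K. Set ε := 2/D² and η := D/√2. Let μ̂₁, …, μ̂_{T+1} ∈ K and ν₁, …, ν_{T+1} ∈ K; write ∇_t := ∇ℓ_t(μ̂_t), G₀ := ε·I_d, G_t := G_{t−1} + ∇_t∇_tᵀ, H_t := G_t^{1/2} (the unique positive semidefinite square root), and μ̂_{temp,t+1} := μ̂_t − η·H_t⁻¹∇_t. Assume for every 1 ≤ t ≤ T the ADJUST contraction (μ̂_{t+1} − ν_{t+1})ᵀ H_t (μ̂_{t+1} − ν_{t+1}) ≤ (μ̂_{temp,t+1} − ν_t)ᵀ H_t (μ̂_{temp,t+1} − ν_t). Then Σ_{t=1}^{T} (ℓ_t(μ̂_t) − ℓ_t(ν_t))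 ≤ √2·D·(1 + Tr(H_T)). -/
/-!
Write `x_t = μ̂_t - ν_t`. Expanding the ADJUST contraction in the `H_t`-norm gives, per round,
`2η ⟨∇_t, x_t⟩ ≤ x_tᵀ H_t x_t - x_{t+1}ᵀ H_t x_{t+1} + η² ∇_tᵀ H_t⁻¹ ∇_t`.
Since `H_t² - H_{t-1}² = ∇_t ∇_tᵀ ⪰ 0` and the square root is operator monotone, `H_t ⪰ H_{t-1}`,
so changing the metric costs `x_tᵀ (H_t - H_{t-1}) x_t ≤ D² Tr (H_t - H_{t-1})`; and
`∇_tᵀ H_t⁻¹ ∇_t = Tr (H_t⁻¹ (H_t² - H_{t-1}²)) ≤ 2 Tr (H_t - H_{t-1})`. Both telescope, giving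
`2η Σ ⟨∇_t, x_t⟩ ≤ (D² + 2η²) Tr H_T = 2 D² Tr H_T`, and convexity bounds the regret by
`Σ ⟨∇_t, x_t⟩`.
-/

open Matrix RealInnerProductSpace Finset

theorem Finset.sum_Icc_le_sub_of_le {α : Type*} [AddCommGroup α] [PartialOrder α]
    [IsOrderedAddMonoid α] {a f : ℕ → α} {T : ℕ} (h : ∀ t ∈ Icc 1 T, a t ≤ f t - f (t - 1)) :
    ∑ t ∈ Icc 1 T, a t ≤ f T - f 0 := by
  induction T with
  | zero => simp
  | succ T ih =>
    rw [sum_Icc_succ_top (by omega)]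
    have hlast := h (T + 1) (by simp)
    have hprev := ih fun t ht => h t (Icc_subset_Icc_right T.le_succ ht)
    rw [Nat.add_sub_cancel] at hlast
    calc _ ≤ f T - f 0 + (f (T + 1) - f T) := add_le_add hprev hlast
      _ = f (T + 1) - f 0 := by abel

theorem EuclideanSpace.real_inner_eq_dotProduct {ι : Type*} [Fintype ι]
    (x y : EuclideanSpace ℝ ι) : ⟪x, y⟫ = x.ofLp ⬝ᵥ y.ofLp := by
  rw [inner_eq_star_dotProduct, star_trivial, dotProduct_comm]

namespace Matrix

variable {n : Type*} [Fintype n]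

theorem posSemidef_vecMulVec_self (g : n → ℝ) : (vecMulVec g g).PosSemidef := by
  simpa using posSemidef_vecMulVec_self_star g

theorem IsHermitian.dotProduct_mulVec_comm {A : Matrix n n ℝ} (hA : A.IsHermitian)
    (x y : n → ℝ) : x ⬝ᵥ A *ᵥ y = (A *ᵥ x) ⬝ᵥ y := by
  rw [dotProduct_mulVec, ← mulVec_transpose, ← conjTranspose_eq_transpose_of_trivial, hA.eq]

theorem PosSemidef.dotProduct_mulVec_le_dotProduct_mul_trace {M : Matrix n n ℝ}
    (hM : M.PosSemidef) (x : n → ℝ) : x ⬝ᵥ M *ᵥ x ≤ (x ⬝ᵥ x) * M.trace := by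
  obtain ⟨m, v, rfl⟩ := posSemidef_iff_eq_sum_vecMulVec.mp hM
  simp only [star_trivial, sum_mulVec, vecMulVec_mulVec, trace_sum, trace_vecMulVec,
    dotProduct_sum, mul_sum, MulOpposite.smul_eq_mul_unop, MulOpposite.unop_op, dotProduct_smul]
  refine sum_le_sum fun i _ => ?_
  rw [dotProduct_comm x (v i), mul_comm (x ⬝ᵥ x)]
  simpa only [dotProduct, sq] using sum_mul_sq_le_sq_mul_sq univ (v i) x

theorem posDef_of_eq_add_vecMulVec {G : ℕ → Matrix n n ℝ} {g : ℕ → n → ℝ} {T : ℕ}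
    (h₀ : (G 0).PosDef) (hG : ∀ t ∈ Icc 1 T, G t = G (t - 1) + vecMulVec (g t) (g t)) :
    ∀ t ≤ T, (G t).PosDef
  | 0, _ => h₀
  | t + 1, ht => by
    rw [hG (t + 1) (mem_Icc.2 ⟨by omega, ht⟩), Nat.add_sub_cancel]
    exact (posDef_of_eq_add_vecMulVec h₀ hG t (by omega)).add_posSemidef
      (posSemidef_vecMulVec_self _)

variable [DecidableEq n]

theorem PosSemidef.posDef_of_posDef_mul_self {H : Matrix n n ℝ} (hH : H.PosSemidef)
    (hHH : (H * H).PosDef) : H.PosDef :=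
  hH.posDef_iff_isUnit.2 <| (isUnit_iff_isUnit_det H).2 <| isUnit_of_mul_isUnit_left <| by
    rw [← det_mul]; exact (isUnit_iff_isUnit_det _).1 hHH.isUnit

/-- Operator monotonicity of the square root. For an eigenvector `v` of `X - Y` with eigenvalue
`μ`, the identity `X * X - Y * Y = X * (X - Y) + (X - Y) * Y` gives
`vᵀ (X * X - Y * Y) v = μ (vᵀ X v + vᵀ Y v)`. -/
theorem PosSemidef.sub_of_mul_self_sub_mul_self {X Y : Matrix n n ℝ} (hX : X.PosSemidef)
    (hY : Y.PosSemidef) (hXY : (X * X - Y * Y).PosSemidef) : (X - Y).PosSemidef := by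
  have hH : (X - Y).IsHermitian := hX.isHermitian.sub hY.isHermitian
  refine hH.posSemidef_iff_eigenvalues_nonneg.mpr fun i => ?_
  set v : n → ℝ := (hH.eigenvectorBasis i).ofLp
  set μ := hH.eigenvalues i
  have hv : (X - Y) *ᵥ v = μ • v := hH.mulVec_eigenvectorBasis i
  have hv0 : v ≠ 0 := fun h =>
    hH.eigenvectorBasis.orthonormal.ne_zero i (by ext j; exact congrFun h j)
  have hXv := hX.dotProduct_mulVec_nonneg v
  have hYv := hY.dotProduct_mulVec_nonneg v
  have hXYv := hXY.dotProduct_mulVec_nonneg v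
  simp only [star_trivial] at hXv hYv hXYv
  have key : v ⬝ᵥ (X * X - Y * Y) *ᵥ v = μ * (v ⬝ᵥ X *ᵥ v + v ⬝ᵥ Y *ᵥ v) := by
    rw [show X * X - Y * Y = X * (X - Y) + (X - Y) * Y by noncomm_ring, add_mulVec,
      ← mulVec_mulVec, ← mulVec_mulVec, hv, dotProduct_add, mulVec_smul, dotProduct_smul,
      hH.dotProduct_mulVec_comm v, hv, smul_dotProduct, hX.isHermitian.dotProduct_mulVec_comm,
      smul_eq_mul, smul_eq_mul, dotProduct_comm (X *ᵥ v)]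
    ring
  rcases (add_nonneg hXv hYv).lt_or_eq with hpos | hzero
  · exact nonneg_of_mul_nonneg_left (key ▸ hXYv) hpos
  · have hXv0 : X *ᵥ v = 0 :=
      (hX.dotProduct_mulVec_zero_iff v).1 (by rw [star_trivial]; linarith)
    have hYv0 : Y *ᵥ v = 0 :=
      (hY.dotProduct_mulVec_zero_iff v).1 (by rw [star_trivial]; linarith)
    rw [sub_mulVec, hXv0, hYv0, sub_zero, eq_comm, smul_eq_zero] at hv
    exact (hv.resolve_right hv0).ge

/-- From `0 ≤ Tr ((Y - X) X⁻¹ (Y - X))`. -/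
theorem PosDef.two_mul_trace_sub_trace_le {X Y : Matrix n n ℝ} (hX : X.PosDef)
    (hY : Y.IsHermitian) : 2 * Y.trace - X.trace ≤ (X⁻¹ * (Y * Y)).trace := by
  have hdet : IsUnit X.det := (isUnit_iff_isUnit_det X).1 hX.isUnit
  have hsq : 0 ≤ ((Y - X)ᴴ * X⁻¹ * (Y - X)).trace :=
    (hX.inv.posSemidef.conjTranspose_mul_mul_same _).trace_nonneg
  have hexpand : (Y - X)ᴴ * X⁻¹ * (Y - X) = Y * X⁻¹ * Y - Y - Y + X := by
    rw [(hY.sub hX.isHermitian).eq]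
    simp only [sub_mul, mul_sub, Matrix.mul_assoc, nonsing_inv_mul _ hdet,
      mul_nonsing_inv _ hdet, Matrix.one_mul, Matrix.mul_one]
    abel
  rw [hexpand, trace_add, trace_sub, trace_sub, trace_mul_cycle, trace_mul_comm (Y * Y)] at hsq
  linarith

theorem PosDef.dotProduct_inv_mulVec_le {X Y : Matrix n n ℝ} {g : n → ℝ} (hX : X.PosDef)
    (hY : Y.IsHermitian) (hXY : X * X = Y * Y + vecMulVec g g) :
    g ⬝ᵥ X⁻¹ *ᵥ g ≤ 2 * (X.trace - Y.trace) := by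
  have htrace : g ⬝ᵥ X⁻¹ *ᵥ g = X.trace - (X⁻¹ * (Y * Y)).trace := by
    rw [dotProduct_comm, ← trace_vecMulVec, ← mul_vecMulVec, ← add_sub_cancel_left (Y * Y)
      (vecMulVec g g), ← hXY, Matrix.mul_sub, ← Matrix.mul_assoc,
      nonsing_inv_mul _ ((isUnit_iff_isUnit_det X).1 hX.isUnit), Matrix.one_mul, trace_sub]
  linarith [hX.two_mul_trace_sub_trace_le hY]

theorem IsHermitian.dotProduct_mulVec_sub_smul_inv_mulVec {X : Matrix n n ℝ}
    (hX : X.IsHermitian) (hdet : IsUnit X.det) (x g : n → ℝ) (η : ℝ) :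
    (x - η • X⁻¹ *ᵥ g) ⬝ᵥ X *ᵥ (x - η • X⁻¹ *ᵥ g) =
      x ⬝ᵥ X *ᵥ x - 2 * η * (g ⬝ᵥ x) + η ^ 2 * (g ⬝ᵥ X⁻¹ *ᵥ g) := by
  have hXX : X *ᵥ X⁻¹ *ᵥ g = g := by
    rw [mulVec_mulVec, mul_nonsing_inv _ hdet, one_mulVec]
  rw [mulVec_sub, mulVec_smul, hXX, sub_dotProduct, dotProduct_sub, dotProduct_sub,
    smul_dotProduct, smul_dotProduct, dotProduct_smul, dotProduct_smul,
    hX.dotProduct_mulVec_comm (X⁻¹ *ᵥ g), hXX, dotProduct_comm x g, dotProduct_comm _ g]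
  simp only [smul_eq_mul]
  ring

/-- `X ⪰ Y` bounds the change of metric `xᵀ (X - Y) x` by `D² Tr (X - Y)`, and the gradient
term is bounded by `2 Tr (X - Y)`. -/
theorem PosDef.two_mul_dotProduct_le_of_adjust {X Y : Matrix n n ℝ} {g x x' : n → ℝ}
    {D η : ℝ} (hX : X.PosDef) (hY : Y.PosSemidef) (hXY : X * X = Y * Y + vecMulVec g g)
    (hx : x ⬝ᵥ x ≤ D ^ 2)
    (hadj : x' ⬝ᵥ X *ᵥ x' ≤ (x - η • X⁻¹ *ᵥ g) ⬝ᵥ X *ᵥ (x - η • X⁻¹ *ᵥ g)) :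
    2 * η * (g ⬝ᵥ x) ≤
      ((D ^ 2 + 2 * η ^ 2) * X.trace - x' ⬝ᵥ X *ᵥ x') -
        ((D ^ 2 + 2 * η ^ 2) * Y.trace - x ⬝ᵥ Y *ᵥ x) := by
  rw [hX.isHermitian.dotProduct_mulVec_sub_smul_inv_mulVec
    ((isUnit_iff_isUnit_det X).1 hX.isUnit)] at hadj
  have hmono : (X - Y).PosSemidef := hX.posSemidef.sub_of_mul_self_sub_mul_self hY <| by
    rw [hXY, add_sub_cancel_left]; exact posSemidef_vecMulVec_self g
  have hmetric : x ⬝ᵥ (X - Y) *ᵥ x ≤ D ^ 2 * (X - Y).trace :=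
    (hmono.dotProduct_mulVec_le_dotProduct_mul_trace x).trans
      (mul_le_mul_of_nonneg_right hx hmono.trace_nonneg)
  rw [sub_mulVec, dotProduct_sub, trace_sub] at hmetric
  have hgrad := mul_le_mul_of_nonneg_left (hX.dotProduct_inv_mulVec_le hY.isHermitian hXY)
    (sq_nonneg η)
  linarith

end Matrix

theorem two_mul_sum_dotProduct_le_of_adjust {n : Type*} [Fintype n] [DecidableEq n]
    {D η : ℝ} {T : ℕ} {x g : ℕ → n → ℝ} {H : ℕ → Matrix n n ℝ}
    (hx : ∀ t ∈ Icc 1 (T + 1), x t ⬝ᵥ x t ≤ D ^ 2)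
    (hH₀ : (H 0).PosSemidef) (hH : ∀ t ∈ Icc 1 T, (H t).PosDef)
    (hHH : ∀ t ∈ Icc 1 T, H t * H t = H (t - 1) * H (t - 1) + vecMulVec (g t) (g t))
    (hadj : ∀ t ∈ Icc 1 T, x (t + 1) ⬝ᵥ H t *ᵥ x (t + 1) ≤
      (x t - η • (H t)⁻¹ *ᵥ g t) ⬝ᵥ H t *ᵥ (x t - η • (H t)⁻¹ *ᵥ g t)) :
    2 * η * ∑ t ∈ Icc 1 T, g t ⬝ᵥ x t ≤ (D ^ 2 + 2 * η ^ 2) * (H T).trace := by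
  have hpsd : ∀ t ≤ T, (H t).PosSemidef
    | 0, _ => hH₀
    | t + 1, ht => (hH (t + 1) (mem_Icc.2 ⟨by omega, ht⟩)).posSemidef
  have htelescope := sum_Icc_le_sub_of_le (a := fun t => 2 * η * (g t ⬝ᵥ x t))
    (f := fun t => (D ^ 2 + 2 * η ^ 2) * (H t).trace - x (t + 1) ⬝ᵥ H t *ᵥ x (t + 1))
    fun t ht => by
      obtain ⟨ht₁, htT⟩ := mem_Icc.1 ht
      simpa only [Nat.sub_add_cancel ht₁] using (hH t ht).two_mul_dotProduct_le_of_adjust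
        (hpsd (t - 1) (by omega)) (hHH t ht) (hx t (mem_Icc.2 ⟨ht₁, by omega⟩)) (hadj t ht)
  have hinit : x 1 ⬝ᵥ H 0 *ᵥ x 1 ≤ D ^ 2 * (H 0).trace :=
    (hH₀.dotProduct_mulVec_le_dotProduct_mul_trace _).trans
      (mul_le_mul_of_nonneg_right (hx 1 (by simp)) hH₀.trace_nonneg)
  have hfinal := (hpsd T le_rfl).dotProduct_mulVec_nonneg (x (T + 1))
  rw [star_trivial] at hfinal
  rw [mul_sum]
  linarith [mul_nonneg (sq_nonneg η) hH₀.trace_nonneg]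

theorem dadagrad_regret_vs_advice_general {d : ℕ}
    (K : Set (EuclideanSpace ℝ (Fin d)))
    (D : ℝ) (hD : 1 / Real.sqrt 2 ≤ D) (hdiam : ∀ x ∈ K, ∀ y ∈ K, ‖x - y‖ ≤ D)
    (T : ℕ) (η : ℝ) (hη : η = D / Real.sqrt 2)
    (ℓ : ℕ → EuclideanSpace ℝ (Fin d) → ℝ)
    (g : ℕ → EuclideanSpace ℝ (Fin d) → EuclideanSpace ℝ (Fin d))
    (hconv : ∀ t ∈ Icc 1 T, ∀ x ∈ K, ∀ y ∈ K, ℓ t x + ⟪g t x, y - x⟫ ≤ ℓ t y)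
    (ε : ℝ) (hε : ε = 2 / D ^ 2)
    (p ν : ℕ → EuclideanSpace ℝ (Fin d))
    (hpK : ∀ t ∈ Icc 1 (T + 1), p t ∈ K) (hνK : ∀ t ∈ Icc 1 (T + 1), ν t ∈ K)
    (Gm H : ℕ → Matrix (Fin d) (Fin d) ℝ)
    (hG0 : Gm 0 = ε • 1)
    (hGrec : ∀ t ∈ Icc 1 T,
      Gm t = Gm (t - 1) + Matrix.vecMulVec (g t (p t) : Fin d → ℝ) (g t (p t) : Fin d → ℝ))
    (hH : ∀ t ≤ T, (H t).PosSemidef ∧ H t * H t = Gm t)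
    (hadj : ∀ t ∈ Icc 1 T,
      (p (t + 1) - ν (t + 1)) ⬝ᵥ (H t).mulVec (p (t + 1) - ν (t + 1)) ≤
      ((p t - η • (EuclideanSpace.equiv (Fin d) ℝ).symm ((H t)⁻¹.mulVec (g t (p t)))) - ν t)
        ⬝ᵥ (H t).mulVec
          ((p t - η • (EuclideanSpace.equiv (Fin d) ℝ).symm ((H t)⁻¹.mulVec (g t (p t))))
            - ν t)) :
    ∑ t ∈ Icc 1 T, (ℓ t (p t) - ℓ t (ν t)) ≤
      Real.sqrt 2 * D * (1 + (H T).trace) := by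
  have hD₀ : 0 < D := lt_of_lt_of_le (by positivity) hD
  have hη₀ : 0 < η := by rw [hη]; positivity
  have h2η : 2 * η = Real.sqrt 2 * D := by rw [hη, mul_div_left_comm, Real.div_sqrt, mul_comm]
  have hη2 : 2 * η ^ 2 = D ^ 2 := by rw [hη, div_pow, Real.sq_sqrt zero_le_two]; ring
  obtain ⟨hHpsd, hHsq⟩ := forall₂_and.1 hH
  have hGm := posDef_of_eq_add_vecMulVec (by rw [hG0, hε]; exact PosDef.one.smul (by positivity))
    hGrec
  have hlinear := two_mul_sum_dotProduct_le_of_adjust (D := D) (η := η)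
    (x := fun t => (p t - ν t).ofLp) (g := fun t => (g t (p t)).ofLp)
    (fun t ht => by
      rw [← EuclideanSpace.real_inner_eq_dotProduct, real_inner_self_eq_norm_sq]
      exact pow_le_pow_left₀ (norm_nonneg _) (hdiam _ (hpK t ht) _ (hνK t ht)) 2)
    (hHpsd 0 T.zero_le)
    (fun t ht => (hHpsd t (mem_Icc.1 ht).2).posDef_of_posDef_mul_self
      (hHsq t (mem_Icc.1 ht).2 ▸ hGm t (mem_Icc.1 ht).2))
    (fun t ht => by rw [hHsq t (mem_Icc.1 ht).2, hHsq (t - 1) (by grind)]; exact hGrec t ht)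
    (fun t ht => by
      simpa only [WithLp.ofLp_sub, WithLp.ofLp_smul, PiLp.continuousLinearEquiv_symm_apply,
        sub_right_comm _ (η • _)] using hadj t ht)
  calc ∑ t ∈ Icc 1 T, (ℓ t (p t) - ℓ t (ν t))
      ≤ ∑ t ∈ Icc 1 T, (g t (p t)).ofLp ⬝ᵥ (p t - ν t).ofLp := sum_le_sum fun t ht => by
        have hmem := Icc_subset_Icc_right T.le_succ ht
        have := hconv t ht _ (hpK t hmem) _ (hνK t hmem)
        rw [EuclideanSpace.real_inner_eq_dotProduct, ← neg_sub, WithLp.ofLp_neg,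
          dotProduct_neg] at this
        linarith
    _ ≤ 2 * η * (H T).trace := by
        refine le_of_mul_le_mul_left (hlinear.trans_eq ?_) (by positivity)
        linear_combination -(H T).trace * hη2
    _ ≤ Real.sqrt 2 * D * (1 + (H T).trace) := by
        rw [h2η]; gcongr; linarith

/-- Proposition `dynamic_adagrad` (regret of Dynamic AdaGrad against the advice sequence):
with `ε = 2/D²`, `G₀ = εI`, `G_t = G_{t−1} + ∇_t∇_tᵀ`, `H_t` the unique positive semidefinite
square root of `G_t`, and predictors satisfying the ADJUST contraction in the `H_t`-norm
against the candidates `μ̂_t − ηH_t⁻¹∇_t` with `η = D/√2` and `D ≥ 1/√2`, the regret against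
the advice `ν` is at most `√2·D·(1 + Tr(H_T))` (Proposition `dynamic_adagrad`). -/
theorem dadagrad_regret_vs_advice {d : ℕ}
    (K : Set (EuclideanSpace ℝ (Fin d))) (hK : Convex ℝ K)
    (D : ℝ) (hD : 1 / Real.sqrt 2 ≤ D) (hdiam : ∀ x ∈ K, ∀ y ∈ K, ‖x - y‖ ≤ D)
    (T : ℕ) (hT : 1 ≤ T) (η : ℝ) (hη : η = D / Real.sqrt 2)
    (ℓ : ℕ → EuclideanSpace ℝ (Fin d) → ℝ)
    (g : ℕ → EuclideanSpace ℝ (Fin d) → EuclideanSpace ℝ (Fin d))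
    (hdiff : ∀ t, ∀ x, HasGradientAt (ℓ t) (g t x) x)
    (hconv : ∀ t ∈ Icc 1 T, ∀ x ∈ K, ∀ y ∈ K, ℓ t x + ⟪g t x, y - x⟫ ≤ ℓ t y)
    (ε : ℝ) (hε : ε = 2 / D ^ 2)
    (p ν : ℕ → EuclideanSpace ℝ (Fin d))
    (hpK : ∀ t ∈ Icc 1 (T + 1), p t ∈ K) (hνK : ∀ t ∈ Icc 1 (T + 1), ν t ∈ K)
    (Gm H : ℕ → Matrix (Fin d) (Fin d) ℝ)
    (hG0 : Gm 0 = ε • 1)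
    (hGrec : ∀ t ∈ Icc 1 T,
      Gm t = Gm (t - 1) + Matrix.vecMulVec (g t (p t) : Fin d → ℝ) (g t (p t) : Fin d → ℝ))
    (hH : ∀ t ≤ T, (H t).PosSemidef ∧ H t * H t = Gm t)
    (hadj : ∀ t ∈ Icc 1 T,
      (p (t + 1) - ν (t + 1)) ⬝ᵥ (H t).mulVec (p (t + 1) - ν (t + 1)) ≤
      ((p t - η • (EuclideanSpace.equiv (Fin d) ℝ).symm ((H t)⁻¹.mulVec (g t (p t)))) - ν t)
        ⬝ᵥ (H t).mulVec
          ((p t - η • (EuclideanSpace.equiv (Fin d) ℝ).symm ((H t)⁻¹.mulVec (g t (p t))))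
            - ν t)) :
    ∑ t ∈ Icc 1 T, (ℓ t (p t) - ℓ t (ν t)) ≤
      Real.sqrt 2 * D * (1 + (H T).trace) :=
  dadagrad_regret_vs_advice_general K D hD hdiam T η hη ℓ g hconv ε hε p ν hpK hνK Gm H hG0 hGrec hH
    hadj
end
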